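/- arXiv:1502.05834 — 2 statements merged into one kernel-verified Lean document; each statement's English description precedes it below -/
import Mathlib

section
/- Neither [K3, K4⁻]^lcom nor [K3, Diff]^lcom has the finite model property. -/
set_option linter.unusedVariables false

/-! ### Unimodal syntax -/

/-- Unimodal formulas: propositional variables, falsum, implication and one box.
Other Booleans and the diamond are defined from these. -/
inductive UForm : Type
  | var : ℕ → UForm
  | bot : UForm
  | imp : UForm → UForm → UForm
  | box : UForm → UForm

namespace UForm
def neg (φ : UForm) : UForm := imp φ bot
def dia (φ : UForm) : UForm := neg (box (neg φ))
end UForm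

/-! ### Bimodal syntax -/

/-- Bimodal formulas: propositional variables, falsum, implication and boxes `□0`, `□1`. -/
inductive BForm : Type
  | var : ℕ → BForm
  | bot : BForm
  | imp : BForm → BForm → BForm
  | box : Fin 2 → BForm → BForm

namespace BForm
def neg (φ : BForm) : BForm := imp φ bot
def top : BForm := neg bot
def and (φ ψ : BForm) : BForm := neg (imp φ (neg ψ))
def or (φ ψ : BForm) : BForm := imp (neg φ) ψ
def dia (i : Fin 2) (φ : BForm) : BForm := neg (box i (neg φ))

/-- Substitution of formulas for propositional variables. -/
def subst (s : ℕ → BForm) : BForm → BForm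
  | var n => s n
  | bot => bot
  | imp φ ψ => imp (subst s φ) (subst s ψ)
  | box i φ => box i (subst s φ)
end BForm

/-- Embedding of unimodal formulas into bimodal ones, reading the unimodal box as `□i`. -/
def UForm.embed (i : Fin 2) : UForm → BForm
  | var n => .var n
  | bot => .bot
  | imp φ ψ => .imp (embed i φ) (embed i ψ)
  | box φ => .box i (embed i φ)

/-! ### Frames and semantics -/

/-- A unimodal Kripke frame: a nonempty set with a binary relation. -/
structure Frame1 : Type 1 where
  W : Type
  ne : Nonempty W
  R : W → W → Prop

/-- Truth of a unimodal formula at a point of a model based on a unimodal frame. -/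
def UTruth (F : Frame1) (V : ℕ → F.W → Prop) : F.W → UForm → Prop
  | w, .var n => V n w
  | _, .bot => False
  | w, .imp φ ψ => UTruth F V w φ → UTruth F V w ψ
  | w, .box φ => ∀ v, F.R w v → UTruth F V v φ

/-- Validity of a unimodal formula in a unimodal frame. -/
def UValid (F : Frame1) (φ : UForm) : Prop := ∀ V w, UTruth F V w φ

/-- `F` is a frame for the set `L` of unimodal formulas. -/
def UFrameFor (F : Frame1) (L : Set UForm) : Prop := ∀ φ ∈ L, UValid F φ

/-- The unimodal logic determined by a class of unimodal frames. -/
def ULog (C : Set Frame1) : Set UForm := { φ | ∀ F ∈ C, UValid F φ }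

/-- The unimodal logic of a single unimodal frame. -/
def LogOf (F : Frame1) : Set UForm := { φ | UValid F φ }

/-- A 2-frame: a nonempty set with two binary relations `R 0` and `R 1`. -/
structure Frame2 : Type 1 where
  W : Type
  ne : Nonempty W
  R : Fin 2 → W → W → Prop

/-- Truth of a bimodal formula at a point of a model based on a 2-frame. -/
def BTruth (F : Frame2) (V : ℕ → F.W → Prop) : F.W → BForm → Prop
  | w, .var n => V n w
  | _, .bot => False
  | w, .imp φ ψ => BTruth F V w φ → BTruth F V w ψ
  | w, .box i φ => ∀ v, F.R i w v → BTruth F V v φ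

/-- Validity of a bimodal formula in a 2-frame. -/
def BValid (F : Frame2) (φ : BForm) : Prop := ∀ V w, BTruth F V w φ

/-- `F` is a frame for the set `L` of bimodal formulas. -/
def FrameFor (F : Frame2) (L : Set BForm) : Prop := ∀ φ ∈ L, BValid F φ

/-! ### Normal bimodal logics -/

/-- `φ` is a propositional tautology: it is true under every assignment of truth values
to formulas that respects `⊥` and `→` (so variables and boxed formulas act as atoms). -/
def BTaut (φ : BForm) : Prop :=
  ∀ v : BForm → Prop, (¬ v .bot) → (∀ a b, v (.imp a b) ↔ (v a → v b)) → v φ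

/-- A normal bimodal logic: contains all propositional tautologies and the K-axioms for
both boxes, and is closed under modus ponens, substitution and necessitation. -/
structure IsLogic (L : Set BForm) : Prop where
  taut : ∀ φ, BTaut φ → φ ∈ L
  kax : ∀ (i : Fin 2) (φ ψ : BForm),
    BForm.imp (.box i (.imp φ ψ)) (.imp (.box i φ) (.box i ψ)) ∈ L
  mp : ∀ φ ψ, BForm.imp φ ψ ∈ L → φ ∈ L → ψ ∈ L
  subst : ∀ φ s, φ ∈ L → BForm.subst s φ ∈ L
  nec : ∀ (i : Fin 2) (φ : BForm), φ ∈ L → BForm.box i φ ∈ L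

/-- The smallest normal bimodal logic containing a given set of bimodal formulas. -/
def SmallestLogic (S : Set BForm) : Set BForm := ⋂₀ { L : Set BForm | IsLogic L ∧ S ⊆ L }

/-- The fusion `L0 ⊕ L1`: the smallest normal bimodal logic containing `L0` (in `□0`)
and `L1` (in `□1`). -/
def Fusion (L0 L1 : Set UForm) : Set BForm :=
  SmallestLogic ((UForm.embed 0 '' L0) ∪ (UForm.embed 1 '' L1))

/-- Left commutativity axiom `□1□0 p → □0□1 p`. -/
def lcomAx : BForm := .imp (.box 1 (.box 0 (.var 0))) (.box 0 (.box 1 (.var 0)))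

/-- Right commutativity axiom `□0□1 p → □1□0 p`. -/
def rcomAx : BForm := .imp (.box 0 (.box 1 (.var 0))) (.box 1 (.box 0 (.var 0)))

/-- Confluence axiom `◇0□1 p → □1◇0 p`. -/
def confAx : BForm := .imp (.dia 0 (.box 1 (.var 0))) (.box 1 (.dia 0 (.var 0)))

/-- The commutator `[L0, L1]`: the smallest normal bimodal logic containing the fusion
together with the two commutativity axioms and the confluence axiom. -/
def Commutator (L0 L1 : Set UForm) : Set BForm :=
  SmallestLogic ((UForm.embed 0 '' L0) ∪ (UForm.embed 1 '' L1) ∪ {lcomAx, rcomAx, confAx})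

/-- `[L0, L1]^lcom`: the smallest normal bimodal logic containing the fusion together
with the left commutativity axiom only. -/
def CommutatorLcom (L0 L1 : Set UForm) : Set BForm :=
  SmallestLogic ((UForm.embed 0 '' L0) ∪ (UForm.embed 1 '' L1) ∪ {lcomAx})

/-- A normal bimodal logic has the finite model property if every bimodal formula not in
`L` fails at some point of a model based on a finite frame for `L`. -/
def HasFMP (L : Set BForm) : Prop :=
  ∀ φ, φ ∉ L → ∃ F : Frame2, Finite F.W ∧ FrameFor F L ∧ ∃ V w, ¬ BTruth F V w φ

/-! ### Products -/

/-- The product of two unimodal frames. -/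
def prodFrame (F0 F1 : Frame1) : Frame2 where
  W := F0.W × F1.W
  ne := F0.ne.elim fun a => F1.ne.elim fun b => ⟨(a, b)⟩
  R := fun i a b =>
    if i = 0 then F0.R a.1 b.1 ∧ a.2 = b.2 else F1.R a.2 b.2 ∧ a.1 = b.1

/-- The product logic `L0 × L1` of two (Kripke complete) unimodal logics: the set of
bimodal formulas valid in every product of a frame for `L0` with a frame for `L1`. -/
def ProdLogic (L0 L1 : Set UForm) : Set BForm :=
  { φ | ∀ F0 F1 : Frame1, UFrameFor F0 L0 → UFrameFor F1 L1 →
      BValid (prodFrame F0 F1) φ }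

/-! ### Relation properties and particular unimodal logics -/

/-- Weak connectedness. -/
def WeaklyConnected {W : Type*} (R : W → W → Prop) : Prop :=
  ∀ x y z, R x y → R x z → y = z ∨ R y z ∨ R z y

/-- Pseudo-transitivity. -/
def PseudoTransitive {W : Type*} (R : W → W → Prop) : Prop :=
  ∀ x y z, R x y → R y z → x = z ∨ R x z

/-- `K`: the unimodal logic determined by all frames. -/
def LogicK : Set UForm := ULog Set.univ

/-- `K3`: the unimodal logic determined by all weakly connected frames. -/
def LogicK3 : Set UForm := ULog { F | WeaklyConnected F.R }

/-- `K4.3`: the unimodal logic determined by all transitive weakly connected frames. -/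
def LogicK43 : Set UForm := ULog { F | Transitive F.R ∧ WeaklyConnected F.R }

/-- `S4.3`: the logic determined by all reflexive transitive weakly connected frames. -/
def LogicS43 : Set UForm :=
  ULog { F | Reflexive F.R ∧ Transitive F.R ∧ WeaklyConnected F.R }

/-- `S5`: the unimodal logic determined by all equivalence frames. -/
def LogicS5 : Set UForm := ULog { F | Equivalence F.R }

/-- `Diff`: the unimodal logic determined by all difference frames `(W, ≠)`. -/
def LogicDiff : Set UForm := ULog { F | ∀ a b, F.R a b ↔ a ≠ b }

/-- `K4⁻`: the unimodal logic determined by all pseudo-transitive frames. -/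
def LogicK4minus : Set UForm := ULog { F | PseudoTransitive F.R }

/-- The frame `(ω + 1, >)` on `{0, 1, 2, …, ω}`. -/
def omegaSuccGt : Frame1 := ⟨WithTop ℕ, ⟨⊤⟩, fun a b => b < a⟩

/-- The difference frame `(ω, ≠)`. -/
def omegaNeq : Frame1 := ⟨ℕ, ⟨0⟩, fun a b => a ≠ b⟩

/-- The frame `(ω, <)`. -/
def omegaLt : Frame1 := ⟨ℕ, ⟨0⟩, fun a b => a < b⟩

/-- The frame `(ω, ≤)`. -/
def omegaLe : Frame1 := ⟨ℕ, ⟨0⟩, fun a b => a ≤ b⟩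

/-- The frame `(ℚ, <)`. -/
def ratLt : Frame1 := ⟨ℚ, ⟨0⟩, fun a b => a < b⟩

/-- A unimodal frame is one-step rooted if some point sees every other point in one step. -/
def OneStepRooted (F : Frame1) : Prop := ∃ r : F.W, ∀ w : F.W, w ≠ r → F.R r w

/-- `F` contains an `(ω + 1, >)`-type chain: there are distinct points `x n` for `n ≤ ω`
such that for `n ≠ m`, `x n` is related to `x m` iff `n > m`. -/
def ContainsOmegaSuccChain (F : Frame1) : Prop :=
  ∃ x : WithTop ℕ → F.W, Function.Injective x ∧
    ∀ n m : WithTop ℕ, n ≠ m → (F.R (x n) (x m) ↔ m < n)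

/-- (lcom) for a 2-frame. -/
def Lcom (F : Frame2) : Prop :=
  ∀ x y z : F.W, F.R 0 x y → F.R 1 y z → ∃ u, F.R 1 x u ∧ F.R 0 u z

/-- (rcom) for a 2-frame. -/
def Rcom (F : Frame2) : Prop :=
  ∀ x y z : F.W, F.R 1 x y → F.R 0 y z → ∃ u, F.R 0 x u ∧ F.R 1 u z

/-- (conf) for a 2-frame. -/
def Conf (F : Frame2) : Prop :=
  ∀ x y z : F.W, F.R 1 x y → F.R 0 x z → ∃ u, F.R 0 y u ∧ F.R 1 z u


/-!
The formula `psi` holds at `(ω, 0)` in `(ω + 1, >) × (ω, ≠)`, a frame for both logics because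
product frames satisfy (lcom). Conversely, in every frame for either logic `R 0` is weakly
connected, `R 1` is pseudo-transitive and (lcom) holds, and there `psi` at `r` forces an endless
sequence of stages: a `p`-point `x` and a `q`-point `w` with `w R0 x`, both `R0`-successors of an
`R1`-successor `u` of `r`; the `x` of the next stage is an `R1`-successor of `w`. (In the product
the `n`-th stage is `x = (n, n + 1)`, `w = (n + 1, n + 1)`, `u = (ω, n + 1)`.) The clauses of `gam`
make the `x` of a stage determine the `x` of the previous one, and only the first `x` satisfies
`e`, so the points `x` are pairwise distinct and the frame is infinite.
-/

section Semantics

variable {F : Frame2} {V : ℕ → F.W → Prop} {w : F.W} {φ ψ : BForm} {i : Fin 2}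

@[simp] lemma bTruth_var (n : ℕ) : BTruth F V w (.var n) ↔ V n w := Iff.rfl

@[simp] lemma bTruth_imp : BTruth F V w (.imp φ ψ) ↔ (BTruth F V w φ → BTruth F V w ψ) :=
  Iff.rfl

@[simp] lemma bTruth_box : BTruth F V w (.box i φ) ↔ ∀ v, F.R i w v → BTruth F V v φ :=
  Iff.rfl

@[simp] lemma bTruth_neg : BTruth F V w φ.neg ↔ ¬ BTruth F V w φ := Iff.rfl

@[simp] lemma bTruth_and : BTruth F V w (φ.and ψ) ↔ BTruth F V w φ ∧ BTruth F V w ψ := by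
  simp [BForm.and]

@[simp] lemma bTruth_or : BTruth F V w (φ.or ψ) ↔ BTruth F V w φ ∨ BTruth F V w ψ := by
  simp [BForm.or, or_iff_not_imp_left]

@[simp] lemma bTruth_dia : BTruth F V w (.dia i φ) ↔ ∃ v, F.R i w v ∧ BTruth F V v φ := by
  simp [BForm.dia]

lemma bTruth_subst (s : ℕ → BForm) (φ : BForm) (w : F.W) :
    BTruth F V w (φ.subst s) ↔ BTruth F (fun n v => BTruth F V v (s n)) w φ := by
  induction φ generalizing w with
  | var n => rfl
  | bot => rfl
  | imp φ ψ ihφ ihψ => exact imp_congr (ihφ w) (ihψ w)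
  | box i φ ih => exact forall_congr' fun v => imp_congr_right fun _ => ih v

end Semantics

namespace UForm

def and (φ ψ : UForm) : UForm := neg (imp φ (neg ψ))

def or (φ ψ : UForm) : UForm := imp (neg φ) ψ

end UForm

section USemantics

variable {F : Frame1} {V : ℕ → F.W → Prop} {w : F.W} {φ ψ : UForm}

@[simp] lemma uTruth_var (n : ℕ) : UTruth F V w (.var n) ↔ V n w := Iff.rfl

@[simp] lemma uTruth_imp : UTruth F V w (.imp φ ψ) ↔ (UTruth F V w φ → UTruth F V w ψ) :=
  Iff.rfl

@[simp] lemma uTruth_box : UTruth F V w (.box φ) ↔ ∀ v, F.R w v → UTruth F V v φ := Iff.rfl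

@[simp] lemma uTruth_and : UTruth F V w (φ.and ψ) ↔ UTruth F V w φ ∧ UTruth F V w ψ := by
  simp [UForm.and, UForm.neg, UTruth]

@[simp] lemma uTruth_or : UTruth F V w (φ.or ψ) ↔ UTruth F V w φ ∨ UTruth F V w ψ := by
  simp [UForm.or, UForm.neg, UTruth, or_iff_not_imp_left]

end USemantics

lemma isLogic_setOf_bValid (F : Frame2) : IsLogic {φ | BValid F φ} where
  taut φ hφ V w := hφ (BTruth F V w) id fun _ _ => Iff.rfl
  kax _ _ _ V _ hφψ hφ v hv := hφψ v hv (hφ v hv)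
  mp _ _ hφψ hφ V w := hφψ V w (hφ V w)
  subst φ s hφ V w := (bTruth_subst s φ w).mpr (hφ _ w)
  nec _ _ hφ V _ v _ := hφ V v

lemma smallestLogic_subset {S L : Set BForm} (hL : IsLogic L) (hS : S ⊆ L) :
    SmallestLogic S ⊆ L :=
  fun _ hφ => hφ L ⟨hL, hS⟩

lemma subset_smallestLogic (S : Set BForm) : S ⊆ SmallestLogic S :=
  fun _ hφ _ hL => hL.2 hφ

def Frame2.slice (F : Frame2) (i : Fin 2) : Frame1 := ⟨F.W, F.ne, F.R i⟩

lemma bTruth_embed {F : Frame2} {V : ℕ → F.W → Prop} (i : Fin 2) (φ : UForm) (w : F.W) :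
    BTruth F V w (φ.embed i) ↔ UTruth (F.slice i) V w φ := by
  induction φ generalizing w with
  | var n => rfl
  | bot => rfl
  | imp φ ψ ihφ ihψ => exact imp_congr (ihφ w) (ihψ w)
  | box φ ih => exact forall_congr' fun v => imp_congr_right fun _ => ih v

lemma bValid_embed_iff {F : Frame2} {i : Fin 2} {φ : UForm} :
    BValid F (φ.embed i) ↔ UValid (F.slice i) φ :=
  forall_congr' fun _ => forall_congr' fun w => bTruth_embed i φ w

lemma bValid_lcomAx_iff {F : Frame2} : BValid F lcomAx ↔ Lcom F := by
  refine ⟨fun h x y z hxy hyz => ?_, fun h V x hx y hxy z hyz => ?_⟩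
  · exact h (fun _ v => ∃ u, F.R 1 x u ∧ F.R 0 u v) x (fun u hu v hv => ⟨u, hu, hv⟩)
      y hxy z hyz
  · obtain ⟨u, hxu, huz⟩ := h x y z hxy hyz
    exact hx u hxu z huz

lemma frameFor_commutatorLcom_iff {F : Frame2} {L0 L1 : Set UForm} :
    FrameFor F (CommutatorLcom L0 L1) ↔
      UFrameFor (F.slice 0) L0 ∧ UFrameFor (F.slice 1) L1 ∧ Lcom F := by
  constructor
  · intro hF
    have hgen := fun φ hφ => hF φ (subset_smallestLogic _ hφ)
    exact ⟨fun φ hφ => bValid_embed_iff.mp (hgen _ (.inl (.inl ⟨φ, hφ, rfl⟩))),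
      fun φ hφ => bValid_embed_iff.mp (hgen _ (.inl (.inr ⟨φ, hφ, rfl⟩))),
      bValid_lcomAx_iff.mp (hgen _ (.inr rfl))⟩
  · rintro ⟨h0, h1, hlcom⟩
    refine smallestLogic_subset (isLogic_setOf_bValid F) ?_
    rintro _ ((⟨φ, hφ, rfl⟩ | ⟨φ, hφ, rfl⟩) | rfl)
    · exact bValid_embed_iff.mpr (h0 φ hφ)
    · exact bValid_embed_iff.mpr (h1 φ hφ)
    · exact bValid_lcomAx_iff.mpr hlcom

def IsBoundedMorphism (F G : Frame1) (f : F.W → G.W) : Prop :=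
  ∀ x v, G.R (f x) v ↔ ∃ y, F.R x y ∧ f y = v

lemma IsBoundedMorphism.uTruth_apply_iff {F G : Frame1} {f : F.W → G.W}
    (hf : IsBoundedMorphism F G f) (V : ℕ → G.W → Prop) (φ : UForm) (x : F.W) :
    UTruth G V (f x) φ ↔ UTruth F (fun n => V n ∘ f) x φ := by
  induction φ generalizing x with
  | var n => rfl
  | bot => rfl
  | imp φ ψ ihφ ihψ => exact imp_congr (ihφ x) (ihψ x)
  | box φ ih =>
    simp only [uTruth_box, hf x, ← ih]
    exact ⟨fun h y hy => h _ ⟨y, hy, rfl⟩, fun h _ ⟨y, hy, hfy⟩ => hfy ▸ h y hy⟩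

lemma uFrameFor_of_forall_exists_boundedMorphism {F G : Frame1} {L : Set UForm}
    (hcover : ∀ w : G.W, ∃ (f : F.W → G.W) (x : F.W), IsBoundedMorphism F G f ∧ f x = w)
    (hF : UFrameFor F L) : UFrameFor G L := by
  intro φ hφ V w
  obtain ⟨f, x, hf, rfl⟩ := hcover w
  exact (hf.uTruth_apply_iff V φ x).mpr (hF φ hφ _ x)

section Product

variable {F0 F1 : Frame1}

lemma uFrameFor_prodFrame_slice_zero {L : Set UForm} (h : UFrameFor F0 L) :
    UFrameFor ((prodFrame F0 F1).slice 0) L := by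
  refine uFrameFor_of_forall_exists_boundedMorphism (fun w => ⟨(·, w.2), w.1, ?_, rfl⟩) h
  intro a v
  exact ⟨fun h => ⟨v.1, h.1, Prod.ext rfl h.2⟩, fun ⟨_, hab, hv⟩ => hv ▸ ⟨hab, rfl⟩⟩

lemma uFrameFor_prodFrame_slice_one {L : Set UForm} (h : UFrameFor F1 L) :
    UFrameFor ((prodFrame F0 F1).slice 1) L := by
  refine uFrameFor_of_forall_exists_boundedMorphism (fun w => ⟨(w.1, ·), w.2, ?_, rfl⟩) h
  intro a v
  exact ⟨fun h => ⟨v.2, h.1, Prod.ext h.2 rfl⟩, fun ⟨_, hab, hv⟩ => hv ▸ ⟨hab, rfl⟩⟩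

lemma lcom_prodFrame : Lcom (prodFrame F0 F1) := by
  rintro ⟨a, b⟩ ⟨a', b'⟩ ⟨a'', b''⟩ ⟨haa', rfl⟩ ⟨hbb'', rfl⟩
  exact ⟨(a, b''), ⟨hbb'', rfl⟩, ⟨haa', rfl⟩⟩

lemma frameFor_prodFrame_commutatorLcom {L0 L1 : Set UForm} (h0 : UFrameFor F0 L0)
    (h1 : UFrameFor F1 L1) : FrameFor (prodFrame F0 F1) (CommutatorLcom L0 L1) :=
  frameFor_commutatorLcom_iff.mpr
    ⟨uFrameFor_prodFrame_slice_zero h0, uFrameFor_prodFrame_slice_one h1, lcom_prodFrame⟩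

end Product

namespace UForm

def weakConnAx : UForm :=
  or (box (imp (and (var 0) (box (var 0))) (var 1)))
    (box (imp (and (var 1) (box (var 1))) (var 0)))

def pseudoTransAx : UForm := imp (and (var 0) (box (var 0))) (box (box (var 0)))

end UForm

section Correspondence

variable {F : Frame1}

lemma weakConnAx_mem_logicK3 : UForm.weakConnAx ∈ LogicK3 := by
  intro F hF V w
  simp only [UForm.weakConnAx, uTruth_or, uTruth_box, uTruth_imp, uTruth_and, uTruth_var]
  by_contra! ⟨⟨y, hwy, ⟨hy, hy'⟩, hny⟩, ⟨z, hwz, ⟨hz, hz'⟩, hnz⟩⟩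
  rcases hF w y z hwy hwz with rfl | hyz | hzy
  exacts [hny hz, hnz (hy' z hyz), hny (hz' y hzy)]

lemma weaklyConnected_of_uValid_weakConnAx (h : UValid F UForm.weakConnAx) :
    WeaklyConnected F.R := by
  intro x y z hxy hxz
  by_contra! ⟨hyz, hnyz, hnzy⟩
  have := h (fun n v => if n = 0 then v ≠ z else v ≠ y) x
  simp only [UForm.weakConnAx, uTruth_or, uTruth_box, uTruth_imp, uTruth_and, uTruth_var,
    if_pos, if_neg one_ne_zero] at this
  rcases this with h0 | h1
  · exact h0 y hxy ⟨hyz, fun v hyv hvz => hnyz (hvz ▸ hyv)⟩ rfl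
  · exact h1 z hxz ⟨hyz.symm, fun v hzv hvy => hnzy (hvy ▸ hzv)⟩ rfl

lemma pseudoTransAx_mem_logicK4minus : UForm.pseudoTransAx ∈ LogicK4minus := by
  intro F hF V w hw y hwy z hyz
  obtain ⟨hw, hw'⟩ := uTruth_and.mp hw
  rcases hF w y z hwy hyz with rfl | hwz
  exacts [hw, hw' z hwz]

lemma pseudoTransitive_of_uValid_pseudoTransAx (h : UValid F UForm.pseudoTransAx) :
    PseudoTransitive F.R :=
  fun x y z hxy hyz =>
    h (fun _ v => x = v ∨ F.R x v) x (uTruth_and.mpr ⟨Or.inl rfl, fun _ => Or.inr⟩)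
      y hxy z hyz

lemma weaklyConnected_of_uFrameFor_logicK3 (h : UFrameFor F LogicK3) : WeaklyConnected F.R :=
  weaklyConnected_of_uValid_weakConnAx (h _ weakConnAx_mem_logicK3)

lemma pseudoTransitive_of_uFrameFor_logicK4minus (h : UFrameFor F LogicK4minus) :
    PseudoTransitive F.R :=
  pseudoTransitive_of_uValid_pseudoTransAx (h _ pseudoTransAx_mem_logicK4minus)

end Correspondence

lemma pseudoTransitive_of_forall_R_iff_ne {W : Type*} {R : W → W → Prop}
    (hR : ∀ a b, R a b ↔ a ≠ b) : PseudoTransitive R :=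
  fun x _ z _ _ => (em (x = z)).imp_right (hR x z).mpr

lemma logicK4minus_subset_logicDiff : LogicK4minus ⊆ LogicDiff :=
  fun _ hφ F hF => hφ F (pseudoTransitive_of_forall_R_iff_ne hF)

namespace PsiFormula

open BForm

def p : BForm := var 0
def q : BForm := var 1
def c : BForm := var 2
def e : BForm := var 3

def gam : BForm :=
  and (imp q (dia 1 (and p (neg e)))) <|
  and (imp p (box 0 (and (neg p) (neg q)))) <|
  and (imp q (box 1 (neg q))) <|
  and (imp p (box 1 (neg p))) <|
  and (imp c (dia 1 (or q (and p e)))) <|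
  and (imp p (box 1 (imp (dia 0 c) c))) <|
  and (imp (and p (neg e)) (dia 0 (dia 1 c))) <|
  and (neg (and p q)) (neg (and q c))

def gamWithin : ℕ → BForm
  | 0 => gam
  | n + 1 => and gam (and (box 0 (gamWithin n)) (box 1 (gamWithin n)))

def psi : BForm :=
  and (gamWithin 5) <|
  and (box 1 (imp (dia 0 p) (dia 0 q))) <|
  and (box 0 (neg p)) (dia 0 (and c (dia 1 (and p e))))

end PsiFormula

open PsiFormula

structure GamAt (F : Frame2) (V : ℕ → F.W → Prop) (w : F.W) : Prop where
  q_dia1_p_not_e : V 1 w → ∃ v, F.R 1 w v ∧ V 0 v ∧ ¬ V 3 v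
  p_box0_not_p_not_q : V 0 w → ∀ v, F.R 0 w v → ¬ V 0 v ∧ ¬ V 1 v
  q_box1_not_q : V 1 w → ∀ v, F.R 1 w v → ¬ V 1 v
  p_box1_not_p : V 0 w → ∀ v, F.R 1 w v → ¬ V 0 v
  c_dia1_q_or_p_e : V 2 w → ∃ v, F.R 1 w v ∧ (V 1 v ∨ V 0 v ∧ V 3 v)
  p_box1_c_of_dia0_c : V 0 w → ∀ v, F.R 1 w v → (∃ z, F.R 0 v z ∧ V 2 z) → V 2 v
  p_not_e_dia0_dia1_c : V 0 w → ¬ V 3 w → ∃ y, F.R 0 w y ∧ ∃ v, F.R 1 y v ∧ V 2 v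
  not_p_and_q : ¬ (V 0 w ∧ V 1 w)
  not_q_and_c : ¬ (V 1 w ∧ V 2 w)

structure PsiAt (F : Frame2) (V : ℕ → F.W → Prop) (r : F.W) : Prop where
  gamWithin_r : BTruth F V r (gamWithin 5)
  box1_dia0_p_imp_dia0_q :
    ∀ u, F.R 1 r u → (∃ x, F.R 0 u x ∧ V 0 x) → ∃ w, F.R 0 u w ∧ V 1 w
  box0_not_p : ∀ v, F.R 0 r v → ¬ V 0 v
  dia0_c_dia1_p_e : ∃ z, F.R 0 r z ∧ V 2 z ∧ ∃ x, F.R 1 z x ∧ V 0 x ∧ V 3 x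

section Truth

variable {F : Frame2} {V : ℕ → F.W → Prop} {w : F.W} {n : ℕ}

lemma bTruth_gam_iff : BTruth F V w gam ↔ GamAt F V w := by
  simp only [gam, p, q, c, e, bTruth_and, bTruth_imp, bTruth_neg, bTruth_or, bTruth_box,
    bTruth_dia, bTruth_var]
  constructor
  · rintro ⟨h1, h2, h3, h4, h5, h6, h7, h8, h9⟩
    exact ⟨h1, h2, h3, h4, h5, h6, fun hp he => h7 ⟨hp, he⟩, h8, h9⟩
  · rintro ⟨h1, h2, h3, h4, h5, h6, h7, h8, h9⟩
    exact ⟨h1, h2, h3, h4, h5, h6, fun hpe => h7 hpe.1 hpe.2, h8, h9⟩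

lemma bTruth_psi_iff : BTruth F V w psi ↔ PsiAt F V w := by
  simp only [psi, p, q, c, e, bTruth_and, bTruth_imp, bTruth_neg, bTruth_box, bTruth_dia,
    bTruth_var]
  exact ⟨fun ⟨h1, h2, h3, h4⟩ => ⟨h1, h2, h3, h4⟩, fun ⟨h1, h2, h3, h4⟩ => ⟨h1, h2, h3, h4⟩⟩

lemma bTruth_gamWithin_succ : BTruth F V w (gamWithin (n + 1)) ↔ BTruth F V w gam ∧
    (∀ v, F.R 0 w v → BTruth F V v (gamWithin n)) ∧
    ∀ v, F.R 1 w v → BTruth F V v (gamWithin n) := by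
  simp only [gamWithin, bTruth_and, bTruth_box]

lemma gamAt_of_bTruth_gamWithin (h : BTruth F V w (gamWithin n)) : GamAt F V w := by
  cases n with
  | zero => exact bTruth_gam_iff.mp h
  | succ n => exact bTruth_gam_iff.mp (bTruth_gamWithin_succ.mp h).1

lemma bTruth_gamWithin_of_rel {i : Fin 2} {v : F.W} (h : BTruth F V w (gamWithin (n + 1)))
    (hwv : F.R i w v) : BTruth F V v (gamWithin n) := by
  rw [bTruth_gamWithin_succ] at h
  fin_cases i
  exacts [h.2.1 v hwv, h.2.2 v hwv]

lemma bTruth_gamWithin_of_succ (h : BTruth F V w (gamWithin (n + 1))) :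
    BTruth F V w (gamWithin n) := by
  induction n generalizing w with
  | zero => exact (bTruth_gamWithin_succ.mp h).1
  | succ n ih =>
    obtain ⟨hw, h0, h1⟩ := bTruth_gamWithin_succ.mp h
    exact bTruth_gamWithin_succ.mpr ⟨hw, fun v hv => ih (h0 v hv), fun v hv => ih (h1 v hv)⟩

lemma bTruth_gamWithin_of_forall (h : ∀ v, GamAt F V v) (n : ℕ) (w : F.W) :
    BTruth F V w (gamWithin n) := by
  induction n generalizing w with
  | zero => exact bTruth_gam_iff.mpr (h w)
  | succ n ih =>
    exact bTruth_gamWithin_succ.mpr ⟨bTruth_gam_iff.mpr (h w), fun v _ => ih v, fun v _ => ih v⟩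

end Truth

lemma infinite_of_injective_step {S W : Type*} {f : S → W} {next : S → S} {P : W → Prop}
    {s₀ : S} (h₀ : P (f s₀)) (hP : ∀ s, ¬ P (f (next s)))
    (hinj : ∀ s t, f (next s) = f (next t) → f s = f t) : Infinite W := by
  refine Infinite.of_injective (fun n => f (next^[n] s₀)) (.of_lt_imp_ne fun a b hab => ?_)
  obtain ⟨d, rfl⟩ := Nat.exists_eq_add_of_lt hab
  induction a with
  | zero =>
    rw [zero_add, Function.iterate_succ_apply']
    exact fun h => hP _ (h ▸ h₀)
  | succ a ih =>
    rw [show a + 1 + d + 1 = a + d + 1 + 1 by omega, Function.iterate_succ_apply',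
      Function.iterate_succ_apply']
    exact fun h => ih (by omega) (hinj _ _ h)

structure PsiRoot (F : Frame2) (V : ℕ → F.W → Prop) (r : F.W) : Prop where
  wc : WeaklyConnected (F.R 0)
  pt : PseudoTransitive (F.R 1)
  lcom : Lcom F
  psi : PsiAt F V r

structure Stage (F : Frame2) (V : ℕ → F.W → Prop) (r : F.W) where
  x : F.W
  u : F.W
  w : F.W
  r_u : F.R 1 r u
  u_w : F.R 0 u w
  w_x : F.R 0 w x
  p_x : V 0 x
  q_w : V 1 w
  gamWithin_w : BTruth F V w (gamWithin 3)
  gamWithin_x : BTruth F V x (gamWithin 2)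

def Stage.Next {F : Frame2} {V : ℕ → F.W → Prop} {r : F.W} (s t : Stage F V r) : Prop :=
  F.R 1 s.w t.x ∧ ¬ V 3 t.x ∧ ∃ z, F.R 1 t.x z ∧ V 2 z ∧ GamAt F V z

namespace PsiRoot

variable {F : Frame2} {V : ℕ → F.W → Prop} {r : F.W}

lemma exists_stage (H : PsiRoot F V r) {c₀ c₁ x : F.W} (hc₀ : c₀ = r ∨ F.R 1 r c₀)
    (hc₀c₁ : F.R 0 c₀ c₁) (hc₁x : F.R 1 c₁ x) (hx : V 0 x)
    (hx' : BTruth F V x (gamWithin 2)) : ∃ s : Stage F V r, s.x = x := by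
  obtain ⟨u, hc₀u, hux⟩ := H.lcom c₀ c₁ x hc₀c₁ hc₁x
  have hur : u ≠ r := by
    rintro rfl
    exact H.psi.box0_not_p x hux hx
  have hru : F.R 1 r u := by
    rcases hc₀ with rfl | hrc₀
    · exact hc₀u
    · exact (H.pt r c₀ u hrc₀ hc₀u).resolve_left hur.symm
  obtain ⟨w, huw, hw⟩ := H.psi.box1_dia0_p_imp_dia0_q u hru ⟨x, hux, hx⟩
  have hu' := bTruth_gamWithin_of_rel H.psi.gamWithin_r hru
  have hxw : x ≠ w := by
    rintro rfl
    exact (gamAt_of_bTruth_gamWithin hx').not_p_and_q ⟨hx, hw⟩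
  have hwx : F.R 0 w x := by
    rcases H.wc u x w hux huw with h | h | h
    · exact absurd h hxw
    · exact absurd hw ((gamAt_of_bTruth_gamWithin hx').p_box0_not_p_not_q hx w h).2
    · exact h
  exact ⟨⟨x, u, w, hru, huw, hwx, hx, hw, bTruth_gamWithin_of_rel hu' huw, hx'⟩, rfl⟩

lemma exists_stage_e (H : PsiRoot F V r) : ∃ s : Stage F V r, V 3 s.x := by
  obtain ⟨z, hrz, -, x, hzx, hx, hex⟩ := H.psi.dia0_c_dia1_p_e
  have hx' := bTruth_gamWithin_of_rel (bTruth_gamWithin_of_rel H.psi.gamWithin_r hrz) hzx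
  obtain ⟨s, rfl⟩ := H.exists_stage (.inl rfl) hrz hzx hx (bTruth_gamWithin_of_succ hx')
  exact ⟨s, hex⟩

lemma exists_next (H : PsiRoot F V r) (s : Stage F V r) : ∃ t, s.Next t := by
  have hs := gamAt_of_bTruth_gamWithin s.gamWithin_w
  obtain ⟨x, hwx, hx, hex⟩ := hs.q_dia1_p_not_e s.q_w
  have hx' := bTruth_gamWithin_of_rel s.gamWithin_w hwx
  have hxγ := gamAt_of_bTruth_gamWithin hx'
  obtain ⟨t, rfl⟩ := H.exists_stage (.inr s.r_u) s.u_w hwx hx hx'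
  refine ⟨t, hwx, hex, ?_⟩
  obtain ⟨y, hxy, v, hyv, hv⟩ := hxγ.p_not_e_dia0_dia1_c hx hex
  obtain ⟨z, hxz, hzv⟩ := H.lcom t.x y v hxy hyv
  exact ⟨z, hxz, hxγ.p_box1_c_of_dia0_c hx z hxz ⟨v, hzv, hv⟩,
    gamAt_of_bTruth_gamWithin (bTruth_gamWithin_of_rel hx' hxz)⟩

lemma x_eq_of_next (H : PsiRoot F V r) {s s' t t' : Stage F V r} (hs : s.Next s')
    (ht : t.Next t') (h : s'.x = t'.x) : s.x = t.x := by
  obtain ⟨hsx', -, -⟩ := hs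
  obtain ⟨htx', hex', z, hx'z, hz, hzγ⟩ := ht
  rw [h] at hsx'
  have hsγ := gamAt_of_bTruth_gamWithin s.gamWithin_w
  have htγ := gamAt_of_bTruth_gamWithin t.gamWithin_w
  have hx'γ := gamAt_of_bTruth_gamWithin t'.gamWithin_x
  have hsz : F.R 1 s.w z := by
    refine (H.pt s.w t'.x z hsx' hx'z).resolve_left ?_
    rintro rfl
    exact hzγ.not_q_and_c ⟨s.q_w, hz⟩
  -- pseudo-transitivity identifies `t.w`, and then `s.w`, with the `q`-point `m` seen from `z`
  obtain ⟨m, hzm, hm⟩ := hzγ.c_dia1_q_or_p_e hz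
  have hm' : F.R 1 t'.x m ∧ V 1 m := by
    rcases H.pt t'.x z m hx'z hzm with rfl | hx'm
    · rcases hm with hq | ⟨-, he⟩
      exacts [absurd ⟨t'.p_x, hq⟩ hx'γ.not_p_and_q, absurd he hex']
    · exact ⟨hx'm, hm.resolve_right fun hm => hx'γ.p_box1_not_p t'.p_x m hx'm hm.1⟩
  have hmt : m = t.w :=
    ((H.pt t.w t'.x m htx' hm'.1).resolve_right (htγ.q_box1_not_q t.q_w m · hm'.2)).symm
  subst hmt
  have hst : s.w = t.w :=
    (H.pt s.w z t.w hsz hzm).resolve_right (hsγ.q_box1_not_q s.q_w t.w · t.q_w)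
  rcases H.wc s.w s.x t.x s.w_x (hst ▸ t.w_x) with h | h | h
  · exact h
  · exact absurd t.p_x ((gamAt_of_bTruth_gamWithin s.gamWithin_x).p_box0_not_p_not_q s.p_x _ h).1
  · exact absurd s.p_x ((gamAt_of_bTruth_gamWithin t.gamWithin_x).p_box0_not_p_not_q t.p_x _ h).1

lemma infinite (H : PsiRoot F V r) : Infinite F.W := by
  obtain ⟨s₀, hs₀⟩ := H.exists_stage_e
  choose next hnext using H.exists_next
  exact infinite_of_injective_step (f := Stage.x) hs₀ (fun s => (hnext s).2.1)
    fun s t => H.x_eq_of_next (hnext s) (hnext t)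

end PsiRoot

/-- `prodFrame omegaSuccGt omegaNeq`, restated so that its points reducibly live in
`WithTop ℕ × ℕ` and the order lemmas apply to them. -/
abbrev omegaProd : Frame2 where
  W := WithTop ℕ × ℕ
  ne := ⟨(⊤, 0)⟩
  R i x y := if i = 0 then y.1 < x.1 ∧ x.2 = y.2 else x.2 ≠ y.2 ∧ x.1 = y.1

lemma prodFrame_omegaSuccGt_omegaNeq : prodFrame omegaSuccGt omegaNeq = omegaProd := rfl

def countermodelVal : ℕ → WithTop ℕ × ℕ → Prop
  | 0, (a, m) => ∃ n : ℕ, a = n ∧ m = n + 1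
  | 1, (a, m) => ∃ n : ℕ, a = n ∧ m = n ∧ n ≠ 0
  | 2, (a, m) => a ≠ ⊤ ∧ m = 0
  | 3, (a, m) => a = 0 ∧ m = 1
  | _, _ => False

lemma gamAt_countermodel (w : WithTop ℕ × ℕ) : GamAt omegaProd countermodelVal w := by
  obtain ⟨a, m⟩ := w
  constructor
  case q_dia1_p_not_e =>
    rintro ⟨_, rfl, rfl, hm⟩
    exact ⟨(m, m + 1), by simp, ⟨m, rfl, rfl⟩, by simp [countermodelVal, hm]⟩
  case p_box0_not_p_not_q =>
    rintro ⟨n, rfl, rfl⟩ ⟨b, k⟩ ⟨hb, rfl⟩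
    constructor
    · rintro ⟨k, rfl, hk⟩
      have := Nat.cast_lt.mp hb
      omega
    · rintro ⟨k, rfl, hk, -⟩
      have := Nat.cast_lt.mp hb
      omega
  case q_box1_not_q =>
    rintro ⟨n, rfl, rfl, -⟩ ⟨b, k⟩ ⟨hk, rfl⟩ ⟨k', hb, rfl, -⟩
    simp_all
  case p_box1_not_p =>
    rintro ⟨n, rfl, rfl⟩ ⟨b, k⟩ ⟨hk, rfl⟩ ⟨k', hb, rfl⟩
    simp_all
  case c_dia1_q_or_p_e =>
    rintro ⟨ha, rfl⟩
    lift a to ℕ using ha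
    rcases Nat.eq_zero_or_pos a with rfl | ha
    · exact ⟨(0, 1), by simp, .inr ⟨⟨0, rfl, rfl⟩, rfl, rfl⟩⟩
    · exact ⟨(a, a), by simp; omega, .inl ⟨a, rfl, rfl, ha.ne'⟩⟩
  case p_box1_c_of_dia0_c =>
    rintro ⟨n, rfl, rfl⟩ ⟨b, k⟩ ⟨hk, rfl⟩ ⟨⟨b', k'⟩, ⟨hb', rfl⟩, -, rfl⟩
    exact ⟨WithTop.coe_ne_top, rfl⟩
  case p_not_e_dia0_dia1_c =>
    rintro ⟨n, rfl, rfl⟩ he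
    have hn : n ≠ 0 := by rintro rfl; exact he ⟨rfl, rfl⟩
    exact ⟨(0, n + 1), by simpa [pos_iff_ne_zero], (0, 0), by simp, WithTop.coe_ne_top, rfl⟩
  case not_p_and_q =>
    rintro ⟨⟨n, rfl, rfl⟩, ⟨k, h, h', -⟩⟩
    simp_all
  case not_q_and_c =>
    rintro ⟨⟨n, rfl, rfl, hn⟩, -, h⟩
    exact hn h

lemma psiAt_countermodel : PsiAt omegaProd countermodelVal (⊤, 0) where
  gamWithin_r := bTruth_gamWithin_of_forall gamAt_countermodel 5 _
  box1_dia0_p_imp_dia0_q := by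
    rintro ⟨a, k⟩ ⟨hk, rfl⟩ -
    exact ⟨(k, k), by simp, k, rfl, rfl, Ne.symm hk⟩
  box0_not_p := by
    rintro ⟨b, k⟩ ⟨-, rfl⟩ ⟨n, -, hn⟩
    omega
  dia0_c_dia1_p_e :=
    ⟨(0, 0), by simp, ⟨WithTop.coe_ne_top, rfl⟩, (0, 1), by simp, ⟨0, rfl, rfl⟩, rfl, rfl⟩

lemma weaklyConnected_gt {α : Type*} [LinearOrder α] : WeaklyConnected fun a b : α => b < a := by
  intro _ y z _ _
  rcases lt_trichotomy y z with h | h | h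
  exacts [.inr (.inr h), .inl h, .inr (.inl h)]

lemma frameFor_omegaProd {L : Set UForm} (hω : UFrameFor omegaNeq L) :
    FrameFor omegaProd (CommutatorLcom LogicK3 L) :=
  prodFrame_omegaSuccGt_omegaNeq ▸
    frameFor_prodFrame_commutatorLcom
      (fun _ hφ => hφ omegaSuccGt (weaklyConnected_gt (α := WithTop ℕ))) hω

theorem not_hasFMP_commutatorLcom_logicK3 {L : Set UForm} (hL : LogicK4minus ⊆ L)
    (hω : UFrameFor omegaNeq L) : ¬ HasFMP (CommutatorLcom LogicK3 L) := by
  intro hfmp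
  have hψ : psi.neg ∉ CommutatorLcom LogicK3 L := fun h =>
    frameFor_omegaProd hω _ h countermodelVal (⊤, 0) (bTruth_psi_iff.mpr psiAt_countermodel)
  obtain ⟨F, hfin, hF, V, r, hr⟩ := hfmp _ hψ
  obtain ⟨h0, h1, hlcom⟩ := frameFor_commutatorLcom_iff.mp hF
  have H : PsiRoot F V r :=
    ⟨weaklyConnected_of_uFrameFor_logicK3 h0,
      pseudoTransitive_of_uFrameFor_logicK4minus fun φ hφ => h1 φ (hL hφ), hlcom,
      bTruth_psi_iff.mp (not_not.mp hr)⟩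
  exact not_finite_iff_infinite.mpr H.infinite hfin

/-- **Corollary.** Neither `[K3, K4⁻]^lcom` nor `[K3, Diff]^lcom` has the finite model
property. -/
theorem no_fmp_K3_K4minus_lcom_and_K3_Diff_lcom :
    ¬ HasFMP (CommutatorLcom LogicK3 LogicK4minus) ∧
    ¬ HasFMP (CommutatorLcom LogicK3 LogicDiff) :=
  ⟨not_hasFMP_commutatorLcom_logicK3 subset_rfl
      fun _ hφ => hφ omegaNeq (pseudoTransitive_of_forall_R_iff_ne fun _ _ => Iff.rfl),
    not_hasFMP_commutatorLcom_logicK3 logicK4minus_subset_logicDiff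
      fun _ hφ => hφ omegaNeq fun _ _ => Iff.rfl⟩
end

section
/- Let F = (W,R0,R1) be any 2-frame such that R0 is weakly connected, and R0, R1 are confluent and commute (i.e., (lcom), (rcom) and (conf) hold). If the formula φ∞ is satisfiable in F (i.e., φ∞ holds at some point of some model based on F), then W is infinite. -/
set_option linter.unusedVariables false

/-! ### The formula `φ∞` -/

/-- The propositional variable `p`. -/
def pV : BForm := .var 0

/-- The formula `φ∞`: the conjunction of
`◇1◇0(p ∧ □0⊥)`,
`□1(◇0 p → ◇0(◇0 p ∧ □0□0¬p))`, and
`□0(◇1(◇0 p ∧ □0□0¬p) → ◇1(p ∧ □0¬p ∧ □0□0¬p))`. -/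
def phiInf : BForm :=
  .and (.dia 1 (.dia 0 (.and pV (.box 0 .bot))))
    (.and
      (.box 1 (.imp (.dia 0 pV)
        (.dia 0 (.and (.dia 0 pV) (.box 0 (.box 0 (.neg pV)))))))
      (.box 0 (.imp
        (.dia 1 (.and (.dia 0 pV) (.box 0 (.box 0 (.neg pV)))))
        (.dia 1 (.and pV (.and (.box 0 (.neg pV)) (.box 0 (.box 0 (.neg pV)))))))))

/-! The points `u` with `w R1;R0 u` at which `p ∧ □0¬p ∧ □0□0¬p` holds realise every finite
`R0`-depth. The first conjunct of `φ∞` gives one of depth `0`. Given one of depth `n`, the second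
conjunct and weak connectedness give an `R0`-predecessor `x` of `u` whose only successors are `u`
and those of `u`, so `x` has depth `n + 1`; via (rcom) the third conjunct gives such a point that
is an `R1`-sibling of `x`, hence of the same depth, since (rcom) and (conf) let `R1` carry
`R0`-chains both ways; (lcom) puts it back below `w` in the form `w R1;R0 u`. -/

section Semantics

variable {F : Frame2} {V : ℕ → F.W → Prop} {w : F.W}

theorem btruth_and {a b : BForm} :
    BTruth F V w (.and a b) ↔ BTruth F V w a ∧ BTruth F V w b := by
  simp only [BForm.and, BForm.neg, BTruth]
  tauto

theorem btruth_dia {i : Fin 2} {a : BForm} :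
    BTruth F V w (.dia i a) ↔ ∃ v, F.R i w v ∧ BTruth F V v a := by
  simp only [BForm.dia, BForm.neg, BTruth]
  grind

end Semantics

section Depth

variable {W : Type*} {R S : W → W → Prop}

variable (R) in
def HasChain : ℕ → W → Prop
  | 0, _ => True
  | n + 1, u => ∃ v, R u v ∧ HasChain n v

variable (R) in
def ExactDepth (n : ℕ) (u : W) : Prop := HasChain R n u ∧ ¬ HasChain R (n + 1) u

theorem HasChain.of_le : ∀ {m n : ℕ} {u : W}, m ≤ n → HasChain R n u → HasChain R m u
  | 0, _, _, _, _ => trivial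
  | _ + 1, _ + 1, _, hmn, ⟨v, huv, hv⟩ => ⟨v, huv, of_le (Nat.le_of_succ_le_succ hmn) hv⟩

theorem HasChain.of_confluent (hconf : ∀ c z g, S c z → R c g → ∃ u, R z u ∧ S g u) :
    ∀ {n : ℕ} {c z : W}, S c z → HasChain R n c → HasChain R n z
  | 0, _, _, _, _ => trivial
  | _ + 1, c, z, hcz, ⟨g, hcg, hg⟩ =>
    let ⟨u, hzu, hgu⟩ := hconf c z g hcz hcg
    ⟨u, hzu, of_confluent hconf hgu hg⟩

theorem HasChain.of_commute (hcom : ∀ c z t, S c z → R z t → ∃ g, R c g ∧ S g t) :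
    ∀ {n : ℕ} {c z : W}, S c z → HasChain R n z → HasChain R n c
  | 0, _, _, _, _ => trivial
  | _ + 1, c, z, hcz, ⟨t, hzt, ht⟩ =>
    let ⟨g, hcg, hgt⟩ := hcom c z t hcz hzt
    ⟨g, hcg, of_commute hcom hgt ht⟩

theorem ExactDepth.of_siblings (hconf : ∀ c z g, S c z → R c g → ∃ u, R z u ∧ S g u)
    (hcom : ∀ c z t, S c z → R z t → ∃ g, R c g ∧ S g t) {n : ℕ} {c x y : W}
    (hcx : S c x) (hcy : S c y) (hx : ExactDepth R n x) : ExactDepth R n y :=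
  ⟨.of_confluent hconf hcy (.of_commute hcom hcx hx.1),
    fun hy => hx.2 (.of_confluent hconf hcx (.of_commute hcom hcy hy))⟩

theorem ExactDepth.succ_of_forall {n : ℕ} {x u : W} (hu : ExactDepth R n u) (hxu : R x u)
    (hx : ∀ y, R x y → y = u ∨ R u y) : ExactDepth R (n + 1) x := by
  refine ⟨⟨u, hxu, hu.1⟩, fun ⟨y, hxy, hy⟩ => ?_⟩
  rcases hx y hxy with rfl | huy
  · exact hu.2 hy
  · exact hu.2 ⟨y, huy, hy.of_le n.le_succ⟩

theorem ExactDepth.unique {m n : ℕ} {u : W} (hm : ExactDepth R m u) (hn : ExactDepth R n u) :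
    m = n := by
  by_contra hne
  rcases Nat.lt_or_gt_of_ne hne with h | h
  · exact hm.2 (hn.1.of_le h)
  · exact hn.2 (hm.1.of_le h)

theorem infinite_of_forall_exists_exactDepth (h : ∀ n, ∃ u, ExactDepth R n u) : Infinite W := by
  choose f hf using h
  exact Infinite.of_injective f fun m n hmn => (hf m).unique (hmn ▸ hf n)

end Depth

section PointClasses

variable {W : Type*} {R : W → W → Prop} {P : W → Prop}

variable (R P) in
/-- `p ∧ □¬p ∧ □□¬p` -/
def IsolatedP (u : W) : Prop :=
  P u ∧ (∀ y, R u y → ¬ P y) ∧ ∀ y, R u y → ∀ z, R y z → ¬ P z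

variable (R P) in
/-- `◇p ∧ □□¬p` -/
def SeesPOnlyNext (x : W) : Prop :=
  (∃ y, R x y ∧ P y) ∧ ∀ y, R x y → ∀ z, R y z → ¬ P z

theorem WeaklyConnected.rel_of_seesPOnlyNext (hwc : WeaklyConnected R) {t x u : W}
    (htx : R t x) (htu : R t u) (hx : SeesPOnlyNext R P x) (hu : IsolatedP R P u) : R x u := by
  obtain ⟨y, hxy, hy⟩ := hx.1
  rcases hwc t x u htx htu with rfl | hxu | hux
  · exact (hu.2.1 y hxy hy).elim
  · exact hxu
  · exact (hu.2.2 x hux y hxy hy).elim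

theorem WeaklyConnected.eq_or_rel_of_seesPOnlyNext (hwc : WeaklyConnected R) {x u : W}
    (hxu : R x u) (hx : SeesPOnlyNext R P x) (hu : P u) : ∀ y, R x y → y = u ∨ R u y := by
  intro y hxy
  rcases hwc x y u hxy hxu with rfl | hyu | huy
  · exact .inl rfl
  · exact (hx.2 y hxy u hyu hu).elim
  · exact .inr huy

end PointClasses

section PhiInf

variable {F : Frame2} {P : F.W → Prop} {w : F.W}

theorem exists_exactDepth_succ (hwc : WeaklyConnected (F.R 0)) (hl : Lcom F) (hr : Rcom F)
    (hc : Conf F)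
    (hpred : ∀ t, F.R 1 w t → (∃ u, F.R 0 t u ∧ P u) →
      ∃ x, F.R 0 t x ∧ SeesPOnlyNext (F.R 0) P x)
    (hsib : ∀ v, F.R 0 w v → (∃ x, F.R 1 v x ∧ SeesPOnlyNext (F.R 0) P x) →
      ∃ u, F.R 1 v u ∧ IsolatedP (F.R 0) P u)
    {n : ℕ} {t u : F.W} (hwt : F.R 1 w t) (htu : F.R 0 t u) (hu : IsolatedP (F.R 0) P u)
    (hd : ExactDepth (F.R 0) n u) :
    ∃ t' u', F.R 1 w t' ∧ F.R 0 t' u' ∧ IsolatedP (F.R 0) P u' ∧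
      ExactDepth (F.R 0) (n + 1) u' := by
  obtain ⟨x, htx, hx⟩ := hpred t hwt ⟨u, htu, hu.1⟩
  have hxu := hwc.rel_of_seesPOnlyNext htx htu hx hu
  have hdx := hd.succ_of_forall hxu (hwc.eq_or_rel_of_seesPOnlyNext hxu hx hu.1)
  obtain ⟨v, hwv, hvx⟩ := hr w t x hwt htx
  obtain ⟨u', hvu', hu'⟩ := hsib v hwv ⟨x, hvx, hx⟩
  obtain ⟨t', hwt', ht'u'⟩ := hl w v u' hwv hvu'
  exact ⟨t', u', hwt', ht'u', hu', hdx.of_siblings hc hr hvx hvu'⟩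

end PhiInf

/-- **Lemma 1.** If the 2-frame `F` has weakly connected `R0`, and `R0, R1` commute and
are confluent, then satisfiability of `φ∞` in `F` forces `F` to be infinite. -/
theorem infinite_of_phiInf_sat (F : Frame2)
    (hwc : WeaklyConnected (F.R 0))
    (hl : Lcom F) (hr : Rcom F) (hc : Conf F)
    (V : ℕ → F.W → Prop) (w : F.W) (h : BTruth F V w phiInf) :
    Infinite F.W := by
  simp only [phiInf, pV, btruth_and, btruth_dia, BForm.neg, BTruth] at h
  obtain ⟨⟨r, hwr, z, hrz, hpz, hz⟩, hpred, hsib⟩ := h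
  suffices hchain : ∀ n, ∃ t u, F.R 1 w t ∧ F.R 0 t u ∧ IsolatedP (F.R 0) (V 0) u ∧
      ExactDepth (F.R 0) n u from
    infinite_of_forall_exists_exactDepth fun n =>
      let ⟨_, u, _, _, _, hu⟩ := hchain n
      ⟨u, hu⟩
  intro n
  induction n with
  | zero =>
    exact ⟨r, z, hwr, hrz, ⟨hpz, fun y hy => (hz y hy).elim, fun y hy => (hz y hy).elim⟩,
      trivial, fun ⟨y, hy, _⟩ => hz y hy⟩
  | succ n ih =>
    obtain ⟨t, u, hwt, htu, hu, hd⟩ := ih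
    exact exists_exactDepth_succ hwc hl hr hc hpred hsib hwt htu hu hd
end
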